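/- arXiv:gr-qc/0406021 — 4 statements merged into one kernel-verified Lean document; each statement's English description precedes it below -/
import Mathlib

section
/- Let I ⊆ ℝ be an interval and let x, v : I → ℝ³ be differentiable curves such that x′(t) = α(t)·v(t) and v′(t) = β(t)·x(t) for all t ∈ I, where α, β : I → ℝ. Then the function t ↦ |x(t)|²·|v(t)|² − (x(t)·v(t))² is constant on I. -/
open scoped RealInnerProductSpace

theorem Convex.is_const_of_hasDerivWithinAt_zero {F : Type*} [NormedAddCommGroup F]
    [NormedSpace ℝ F] {s : Set ℝ} (hs : Convex ℝ s) {f : ℝ → F}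
    (hf : ∀ t ∈ s, HasDerivWithinAt f 0 s t) {a b : ℝ} (ha : a ∈ s) (hb : b ∈ s) :
    f a = f b := by
  have h := hs.norm_image_sub_le_of_norm_hasDerivWithin_le hf (fun _ _ => norm_zero.le) ha hb
  rw [zero_mul, norm_le_zero_iff, sub_eq_zero] at h
  exact h.symm

/-- Both `‖x‖²‖v‖²` and `⟪x, v⟫²` have derivative `2⟪x, v⟫ (a ‖v‖² + b ‖x‖²)`. -/
theorem hasDerivAt_norm_sq_mul_norm_sq_sub_inner_sq {E : Type*} [NormedAddCommGroup E]
    [InnerProductSpace ℝ E] {x v : ℝ → E} {a b t : ℝ}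
    (hx : HasDerivAt x (a • v t) t) (hv : HasDerivAt v (b • x t) t) :
    HasDerivAt (fun t => ‖x t‖ ^ 2 * ‖v t‖ ^ 2 - ⟪x t, v t⟫ ^ 2) 0 t := by
  refine ((hx.norm_sq.mul hv.norm_sq).sub ((hx.inner ℝ hv).pow 2)).congr_deriv ?_
  simp only [real_inner_smul_left, real_inner_smul_right, real_inner_self_eq_norm_sq,
    real_inner_comm (x t) (v t)]
  ring

/-- Conservation of the squared angular momentum `L = |x|²|v|² − (x·v)²` along
characteristics of a radial force field: if `x′ = α·v` and `v′ = β·x` on an interval `I`,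
then `t ↦ |x(t)|²|v(t)|² − (x(t)·v(t))²` is constant on `I`. -/
theorem angular_momentum_conserved (I : Set ℝ) (hI : I.OrdConnected)
    (x v : ℝ → EuclideanSpace ℝ (Fin 3)) (α β : ℝ → ℝ)
    (hx : ∀ t ∈ I, HasDerivAt x (α t • v t) t)
    (hv : ∀ t ∈ I, HasDerivAt v (β t • x t) t) :
    ∀ s ∈ I, ∀ t ∈ I,
      ‖x s‖ ^ 2 * ‖v s‖ ^ 2 - ⟪x s, v s⟫ ^ 2
        = ‖x t‖ ^ 2 * ‖v t‖ ^ 2 - ⟪x t, v t⟫ ^ 2 := fun _ hs _ ht =>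
  hI.convex.is_const_of_hasDerivWithinAt_zero
    (fun t ht => (hasDerivAt_norm_sq_mul_norm_sq_sub_inner_sq (hx t ht) (hv t ht)).hasDerivWithinAt)
    hs ht
end

section
/- Let ε > 0, K ≥ 0, r ≥ ε, let w > 0, w̃ > 0 and L, L̃ ∈ [0,K], and set u² := w² + L/r², ũ² := w̃² + L̃/r² (with u, ũ ≥ 0). Then w·w̃ − √(1+u²)·w̃²/√(1+ũ²) ≤ (1 + K/ε²)·w·w̃/(1 + w̃²). -/
open Real

/-- Key upper bound for `Q(w,w̃) = w·w̃ − √(1+u²)·w̃²/√(1+ũ²)` when both radial momenta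
are positive: `Q(w,w̃) ≤ (1 + K/ε²)·w·w̃/(1 + w̃²)`. -/
theorem Q_upper_bound (ε K r w wt L Lt u ut : ℝ)
    (hε : 0 < ε) (hK : 0 ≤ K) (hr : ε ≤ r)
    (hw : 0 < w) (hwt : 0 < wt)
    (hL : 0 ≤ L) (hLK : L ≤ K) (hLt : 0 ≤ Lt) (hLtK : Lt ≤ K)
    (hu : 0 ≤ u) (hut : 0 ≤ ut)
    (hu2 : u ^ 2 = w ^ 2 + L / r ^ 2) (hut2 : ut ^ 2 = wt ^ 2 + Lt / r ^ 2) :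
    w * wt - Real.sqrt (1 + u ^ 2) * wt ^ 2 / Real.sqrt (1 + ut ^ 2)
      ≤ (1 + K / ε ^ 2) * (w * wt / (1 + wt ^ 2)) := by
  have hr0 : (0:ℝ) < r := lt_of_lt_of_le hε hr
  have hr2 : (0:ℝ) < r ^ 2 := by positivity
  have hq : Lt / r ^ 2 ≤ K / ε ^ 2 :=
    div_le_div₀ hK hLtK (by positivity) (by nlinarith)
  have hLtr : 0 ≤ Lt / r ^ 2 := div_nonneg hLt hr2.le
  have hLr : 0 ≤ L / r ^ 2 := div_nonneg hL hr2.le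
  set a := Real.sqrt (1 + u ^ 2) with ha_def
  set b := Real.sqrt (1 + ut ^ 2) with hb_def
  have hb : 0 < b := Real.sqrt_pos.2 (by positivity)
  have hb2 : b ^ 2 = 1 + wt ^ 2 + Lt / r ^ 2 := by
    rw [hb_def, Real.sq_sqrt (by positivity)]; linarith
  have ha2 : a ^ 2 = 1 + u ^ 2 := Real.sq_sqrt (by positivity)
  have ha0 : 0 ≤ a := Real.sqrt_nonneg _
  have haw : w ≤ a := by nlinarith
  have hbwt : wt ≤ b := by nlinarith
  have h1 : w * wt - a * wt ^ 2 / b ≤ w * wt - w * wt ^ 2 / b := by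
    have : w * wt ^ 2 / b ≤ a * wt ^ 2 / b := by gcongr
    linarith
  refine h1.trans ?_
  have key : (b - wt) * (1 + wt ^ 2) ≤ (1 + K / ε ^ 2) * b := by
    have h4 : 1 + wt ^ 2 ≤ b * (b + wt) := by nlinarith
    calc (b - wt) * (1 + wt ^ 2) ≤ (b - wt) * (b * (b + wt)) :=
          mul_le_mul_of_nonneg_left h4 (by linarith)
      _ = b * (1 + Lt / r ^ 2) := by linear_combination b * hb2
      _ ≤ b * (1 + K / ε ^ 2) := by
          exact mul_le_mul_of_nonneg_left (by linarith) hb.le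
      _ = (1 + K / ε ^ 2) * b := by ring
  have heq : w * wt - w * wt ^ 2 / b = w * wt * (b - wt) / b := by
    field_simp
  rw [heq, show (1 + K / ε ^ 2) * (w * wt / (1 + wt ^ 2))
      = (1 + K / ε ^ 2) * (w * wt) / (1 + wt ^ 2) from by ring,
    div_le_div_iff₀ hb (by positivity : (0:ℝ) < 1 + wt ^ 2)]
  have h6 := mul_le_mul_of_nonneg_left key (le_of_lt (mul_pos hw hwt))
  calc w * wt * (b - wt) * (1 + wt ^ 2) = w * wt * ((b - wt) * (1 + wt ^ 2)) := by ring
    _ ≤ w * wt * ((1 + K / ε ^ 2) * b) := h6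
    _ = (1 + K / ε ^ 2) * (w * wt) * b := by ring
end

section
/- Let ε > 0, K ≥ 0, B ≥ 0, r ≥ ε, let w ≤ 0, w̃ ≤ 0 with |w̃| ≤ B, and L, L̃ ∈ [0,K], and set u² := w² + L/r², ũ² := w̃² + L̃/r² (with u, ũ ≥ 0). Then w·w̃ − √(1+u²)·w̃²/√(1+ũ²) ≥ −(1 + K/ε²)·B·|w̃|/√(1 + w̃²). -/
open Real

set_option maxHeartbeats 1000000 in
/-- Lower bound for `Q(w,w̃) = w·w̃ − √(1+u²)·w̃²/√(1+ũ²)` when both radial momenta are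
nonpositive and `|w̃| ≤ B`: `Q(w,w̃) ≥ −(1 + K/ε²)·B·|w̃|/√(1 + w̃²)`. -/
theorem Q_lower_bound_nonpos (ε K B r w wt L Lt u ut : ℝ)
    (hε : 0 < ε) (hK : 0 ≤ K) (hB : 0 ≤ B) (hr : ε ≤ r)
    (hw : w ≤ 0) (hwt : wt ≤ 0) (hwtB : |wt| ≤ B)
    (hL : 0 ≤ L) (hLK : L ≤ K) (hLt : 0 ≤ Lt) (hLtK : Lt ≤ K)
    (hu : 0 ≤ u) (hut : 0 ≤ ut)
    (hu2 : u ^ 2 = w ^ 2 + L / r ^ 2) (hut2 : ut ^ 2 = wt ^ 2 + Lt / r ^ 2) :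
    w * wt - Real.sqrt (1 + u ^ 2) * wt ^ 2 / Real.sqrt (1 + ut ^ 2)
      ≥ -((1 + K / ε ^ 2) * B * |wt| / Real.sqrt (1 + wt ^ 2)) := by
  have hr0 : 0 < r := lt_of_lt_of_le hε hr
  have hKe : 0 ≤ K / ε ^ 2 := by positivity
  have hS : 0 < Real.sqrt (1 + wt ^ 2) := Real.sqrt_pos.2 (by positivity)
  have hLtr : 0 ≤ Lt / r ^ 2 := by positivity
  have hST : Real.sqrt (1 + wt ^ 2) ≤ Real.sqrt (1 + ut ^ 2) := by
    apply Real.sqrt_le_sqrt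
    rw [hut2]; linarith
  have hT : 0 < Real.sqrt (1 + ut ^ 2) := lt_of_lt_of_le hS hST
  have hA0 : 0 ≤ Real.sqrt (1 + u ^ 2) := Real.sqrt_nonneg _
  have hW0 : 0 ≤ Real.sqrt (1 + w ^ 2) := Real.sqrt_nonneg _
  have hLr : L / r ^ 2 ≤ K / ε ^ 2 := by
    apply div_le_div₀ hK hLK (by positivity)
    nlinarith
  have hWsq : Real.sqrt (1 + w ^ 2) ^ 2 = 1 + w ^ 2 :=
    Real.sq_sqrt (by positivity)
  have hAb : Real.sqrt (1 + u ^ 2) ≤ Real.sqrt (1 + w ^ 2) + K / ε ^ 2 := by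
    have h1 : Real.sqrt (1 + u ^ 2) ≤ Real.sqrt (1 + w ^ 2 + K / ε ^ 2) := by
      apply Real.sqrt_le_sqrt; rw [hu2]; linarith
    have hW1 : 1 ≤ Real.sqrt (1 + w ^ 2) := by nlinarith
    have h3 : 1 + w ^ 2 + K / ε ^ 2 ≤ (Real.sqrt (1 + w ^ 2) + K / ε ^ 2) ^ 2 := by
      nlinarith
    have h2 : Real.sqrt (1 + w ^ 2 + K / ε ^ 2)
        ≤ Real.sqrt (1 + w ^ 2) + K / ε ^ 2 := by
      calc Real.sqrt (1 + w ^ 2 + K / ε ^ 2)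
          ≤ Real.sqrt ((Real.sqrt (1 + w ^ 2) + K / ε ^ 2) ^ 2) := Real.sqrt_le_sqrt h3
        _ = Real.sqrt (1 + w ^ 2) + K / ε ^ 2 := Real.sqrt_sq (by positivity)
    linarith
  have hWb : Real.sqrt (1 + w ^ 2) ≤ 1 - w := by
    have h7 : 1 + w ^ 2 ≤ (1 - w) ^ 2 := by ring_nf; linarith
    have h5 : Real.sqrt (1 + w ^ 2) ≤ Real.sqrt ((1 - w) ^ 2) :=
      Real.sqrt_le_sqrt h7
    rwa [Real.sqrt_sq (by linarith)] at h5
  have hwtS : -wt ≤ Real.sqrt (1 + wt ^ 2) := by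
    have h8 : wt ^ 2 ≤ 1 + wt ^ 2 := by linarith
    have h6 : Real.sqrt (wt ^ 2) ≤ Real.sqrt (1 + wt ^ 2) :=
      Real.sqrt_le_sqrt h8
    rwa [Real.sqrt_sq_eq_abs, abs_of_nonpos hwt] at h6
  have habs : |wt| = -wt := abs_of_nonpos hwt
  have hkey : Real.sqrt (1 + u ^ 2) * wt ^ 2 / Real.sqrt (1 + ut ^ 2)
      ≤ (Real.sqrt (1 + w ^ 2) + K / ε ^ 2) * wt ^ 2 / Real.sqrt (1 + wt ^ 2) := by
    apply div_le_div₀ (by positivity) _ hS hST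
    exact mul_le_mul_of_nonneg_right hAb (sq_nonneg wt)
  have hwB : wt ^ 2 ≤ B * (-wt) := by nlinarith [habs ▸ hwtB]
  have hwwtS : (-w) * wt ^ 2 ≤ (w * wt) * Real.sqrt (1 + wt ^ 2) := by
    have h4 : (-w) * (-wt) * (-wt) ≤ (-w) * (-wt) * Real.sqrt (1 + wt ^ 2) :=
      mul_le_mul_of_nonneg_left hwtS (mul_nonneg (by linarith) (by linarith))
    nlinarith [h4]
  have h9 : (Real.sqrt (1 + w ^ 2) + K / ε ^ 2) * wt ^ 2
      ≤ (w * wt) * Real.sqrt (1 + wt ^ 2) + (1 + K / ε ^ 2) * B * |wt| := by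
    rw [habs]
    nlinarith [mul_le_mul_of_nonneg_left hwB hKe,
      mul_le_mul_of_nonneg_right hWb (sq_nonneg wt)]
  have hfin : (Real.sqrt (1 + w ^ 2) + K / ε ^ 2) * wt ^ 2 / Real.sqrt (1 + wt ^ 2)
      ≤ w * wt + (1 + K / ε ^ 2) * B * |wt| / Real.sqrt (1 + wt ^ 2) := by
    calc (Real.sqrt (1 + w ^ 2) + K / ε ^ 2) * wt ^ 2 / Real.sqrt (1 + wt ^ 2)
        ≤ ((w * wt) * Real.sqrt (1 + wt ^ 2) + (1 + K / ε ^ 2) * B * |wt|)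
            / Real.sqrt (1 + wt ^ 2) := by gcongr
      _ = w * wt + (1 + K / ε ^ 2) * B * |wt| / Real.sqrt (1 + wt ^ 2) := by
          field_simp
  linarith [hkey.trans hfin]
end

section
/- Let ε > 0, K ≥ 0, P > 0, r ≥ ε, let w < 0 and 0 < w̃ ≤ P, L ∈ [0,K], L̃ ≥ 0, and set u² := w² + L/r², ũ² := w̃² + L̃/r² (with u, ũ ≥ 0). Then w·w̃ − √(1+u²)·w̃²/√(1+ũ²) ≥ P·w − P·√(1 + K/ε² + w²). -/
open Real

/-- Lower bound for `Q(w,w̃) = w·w̃ − √(1+u²)·w̃²/√(1+ũ²)` in the mixed-sign case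
`w < 0 < w̃ ≤ P`: `Q(w,w̃) ≥ P·w − P·√(1 + K/ε² + w²)`. -/
theorem Q_lower_bound_mixed (ε K P r w wt L Lt u ut : ℝ)
    (hε : 0 < ε) (hK : 0 ≤ K) (hP : 0 < P) (hr : ε ≤ r)
    (hw : w < 0) (hwt : 0 < wt) (hwtP : wt ≤ P)
    (hL : 0 ≤ L) (hLK : L ≤ K) (hLt : 0 ≤ Lt)
    (hu : 0 ≤ u) (hut : 0 ≤ ut)
    (hu2 : u ^ 2 = w ^ 2 + L / r ^ 2) (hut2 : ut ^ 2 = wt ^ 2 + Lt / r ^ 2) :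
    w * wt - Real.sqrt (1 + u ^ 2) * wt ^ 2 / Real.sqrt (1 + ut ^ 2)
      ≥ P * w - P * Real.sqrt (1 + K / ε ^ 2 + w ^ 2) := by
  have hr0 : 0 < r := lt_of_lt_of_le hε hr
  have h1 : P * w ≤ w * wt := by nlinarith
  -- bound the second term
  have hsq1 : Real.sqrt (1 + u ^ 2) ≤ Real.sqrt (1 + K / ε ^ 2 + w ^ 2) := by
    apply Real.sqrt_le_sqrt
    have : L / r ^ 2 ≤ K / ε ^ 2 := by
      apply div_le_div₀ hK hLK (by positivity)
      nlinarith
    linarith [hu2, this]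
  have hwtle : wt ≤ Real.sqrt (1 + ut ^ 2) := by
    have : wt = Real.sqrt (wt ^ 2) := (Real.sqrt_sq hwt.le).symm
    rw [this]
    apply Real.sqrt_le_sqrt
    have : 0 ≤ Lt / r ^ 2 := by positivity
    nlinarith
  have hpos : 0 < Real.sqrt (1 + ut ^ 2) := lt_of_lt_of_le hwt hwtle
  have h2 : wt ^ 2 / Real.sqrt (1 + ut ^ 2) ≤ wt := by
    rw [div_le_iff₀ hpos]
    nlinarith
  have h3 : Real.sqrt (1 + u ^ 2) * wt ^ 2 / Real.sqrt (1 + ut ^ 2)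
      ≤ P * Real.sqrt (1 + K / ε ^ 2 + w ^ 2) := by
    rw [mul_div_assoc]
    calc Real.sqrt (1 + u ^ 2) * (wt ^ 2 / Real.sqrt (1 + ut ^ 2))
        ≤ Real.sqrt (1 + K / ε ^ 2 + w ^ 2) * P := by
          apply mul_le_mul hsq1 (h2.trans hwtP) (by positivity) (Real.sqrt_nonneg _)
      _ = P * Real.sqrt (1 + K / ε ^ 2 + w ^ 2) := mul_comm _ _
  linarith
end
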